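/- Let R > 0 be a real number and define F(σ, ρ) = σ(1−σ)ρ(1−ρ) / (σρ + R)^2 for σ, ρ ∈ (0,1). Then the supremum of F over σ, ρ ∈ (0,1) equals γ = (√(R(R+1)) − R)^2 / (4R^2), and this supremum is attained at σ = ρ = σ_0 where σ_0 = √(R(R+1)) − R, which lies in the open interval (0, 1). -/
import Mathlib


theorem extremal_problem_sup (R : ℝ) (hR : 0 < R) :
    (Real.sqrt (R * (R + 1)) - R) ∈ Set.Ioo (0 : ℝ) 1 ∧
    (Real.sqrt (R * (R + 1)) - R) * (1 - (Real.sqrt (R * (R + 1)) - R)) *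
        (Real.sqrt (R * (R + 1)) - R) * (1 - (Real.sqrt (R * (R + 1)) - R)) /
        ((Real.sqrt (R * (R + 1)) - R) * (Real.sqrt (R * (R + 1)) - R) + R) ^ 2 =
      (Real.sqrt (R * (R + 1)) - R) ^ 2 / (4 * R ^ 2) ∧
    IsGreatest
      {y : ℝ | ∃ σ ∈ Set.Ioo (0 : ℝ) 1, ∃ ρ ∈ Set.Ioo (0 : ℝ) 1,
        y = σ * (1 - σ) * ρ * (1 - ρ) / (σ * ρ + R) ^ 2}
      ((Real.sqrt (R * (R + 1)) - R) ^ 2 / (4 * R ^ 2)) := by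
  set s := Real.sqrt (R * (R + 1)) with hsdef
  have hs2 : s ^ 2 = R * (R + 1) := Real.sq_sqrt (by positivity)
  have hsp : 0 < s := Real.sqrt_pos.mpr (by positivity)
  have h1 : R < s := by nlinarith
  have h2 : s < R + 1 := by nlinarith
  set a := s - R with hadef
  have ha0 : 0 < a := by simp only [hadef]; linarith
  have ha1 : a < 1 := by simp only [hadef]; linarith
  have hakey : a ^ 2 + 2 * R * a = R := by simp only [hadef]; nlinarith
  have hden : a * a + R = 2 * R * (1 - a) := by nlinarith
  have heq : a * (1 - a) * a * (1 - a) / (a * a + R) ^ 2 = a ^ 2 / (4 * R ^ 2) := by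
    rw [hden]
    have h1a : (1:ℝ) - a ≠ 0 := by linarith
    field_simp
    ring
  clear_value s a
  refine ⟨⟨ha0, ha1⟩, heq, ⟨a, ⟨ha0, ha1⟩, a, ⟨ha0, ha1⟩, heq.symm⟩, ?_⟩
  rintro y ⟨σ, ⟨hσ0, hσ1⟩, ρ, ⟨hρ0, hρ1⟩, rfl⟩
  rw [div_le_div_iff₀ (by positivity) (by positivity)]
  set t := Real.sqrt (σ * ρ) with htdef
  have ht2 : t ^ 2 = σ * ρ := Real.sq_sqrt (by positivity)
  have ht0 : 0 < t := Real.sqrt_pos.mpr (by positivity)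
  have ht1 : t < 1 := by nlinarith
  clear_value t
  have hsum : 2 * t ≤ σ + ρ := by nlinarith [sq_nonneg (σ - ρ)]
  have hstep1 : σ * (1 - σ) * ρ * (1 - ρ) ≤ t ^ 2 * (1 - t) ^ 2 := by nlinarith
  have hid : a * (t ^ 2 + R) - 2 * R * t * (1 - t) = (a + 2 * R) * (t - a) ^ 2 := by
    linear_combination (2 * t - a) * hakey
  have hstep2 : 2 * R * t * (1 - t) ≤ a * (t ^ 2 + R) := by
    nlinarith [hid, mul_nonneg (show (0:ℝ) ≤ a + 2 * R by linarith) (sq_nonneg (t - a))]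
  have hL0 : 0 ≤ 2 * R * t * (1 - t) := by
    apply mul_nonneg (by positivity); linarith
  have hsq : (2 * R * t * (1 - t)) ^ 2 ≤ (a * (t ^ 2 + R)) ^ 2 := by
    rw [sq, sq]
    exact mul_le_mul hstep2 hstep2 hL0 (le_trans hL0 hstep2)
  calc σ * (1 - σ) * ρ * (1 - ρ) * (4 * R ^ 2)
      ≤ t ^ 2 * (1 - t) ^ 2 * (4 * R ^ 2) :=
        mul_le_mul_of_nonneg_right hstep1 (by positivity)
    _ = (2 * R * t * (1 - t)) ^ 2 := by ring
    _ ≤ (a * (t ^ 2 + R)) ^ 2 := hsq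
    _ = a ^ 2 * (t ^ 2 + R) ^ 2 := by ring
    _ = a ^ 2 * (σ * ρ + R) ^ 2 := by rw [ht2]
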